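/- Let H be the 3-edge path on 4 vertices whose edges are coloured blue, red, blue in this order along the path. Then the semi-inducibility constant λ_H equals 2^2/3^3 = 4/27. Moreover, almost extremal graphs are almost 1/3-regular: for every ε > 0 there exist δ > 0 and n₀ such that every simple graph G on n ≥ n₀ vertices with λ_H(G) ≥ λ_H − δ has at least (1 − ε)·n vertices whose degree lies between (1/3 − ε)·n and (1/3 + ε)·n. -/

import Mathlib

open Finset
open scoped Classical

/-- Number of embeddings into `G` of the 3-edge path `0-1-2-3` with edges coloured
blue, red, blue in this order: injections `f` with `f 0 f 1` a non-edge, `f 1 f 2` an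
edge, and `f 2 f 3` a non-edge of `G`. -/
noncomputable def numEmbBRB {n : ℕ} (G : SimpleGraph (Fin n)) : ℕ :=
  (Finset.univ.filter (fun f : Fin 4 → Fin n =>
    Function.Injective f ∧
    ¬ G.Adj (f 0) (f 1) ∧ G.Adj (f 1) (f 2) ∧ ¬ G.Adj (f 2) (f 3))).card

/-- `λ_H(G)` for the blue-red-blue path `H`: embedding count divided by `n(n−1)(n−2)(n−3)`. -/
noncomputable def lamBRB {n : ℕ} (G : SimpleGraph (Fin n)) : ℝ :=
  (numEmbBRB G : ℝ) / (n.descFactorial 4 : ℝ)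

/-- `λ_H(n)`: the maximum of `λ_H(G)` over all graphs on `n` vertices. -/
noncomputable def lamBRBmax (n : ℕ) : ℝ :=
  ⨆ G : SimpleGraph (Fin n), lamBRB G

/-!
Writing `d u` for degrees, an embedding is fixed by an edge `uv` and non-neighbours of `u`
and of `v`, so there are at most `∑_{u ~ v} (n - d u) (n - d v) ≤ ∑_u d u (n - d u)²` of
them, the last step being positive semidefiniteness of the Laplacian. Since
`d (n - d)² ≤ 4n³/27 - (n/3) (d - n/3)²` for `d ≤ n`, this gives `λ_H(G) ≤ 4/27 + O(1/n)`,
and a graph close to the bound has `∑_u (d u - n/3)² = O(δ n³ + n²)`, so few vertices of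
degree far from `n/3`. Three disjoint cliques on the residue classes mod 3 attain the bound
asymptotically.
-/

open Filter Topology

theorem SimpleGraph.sum_adj_mul_le_sum_degree_mul_sq {V : Type*} [Fintype V]
    (G : SimpleGraph V) [DecidableRel G.Adj] (x : V → ℝ) :
    ∑ u, ∑ v ∈ G.neighborFinset u, x u * x v ≤ ∑ u, G.degree u * x u ^ 2 := by
  have h := (G.posSemidef_lapMatrix ℝ).dotProduct_mulVec_nonneg x
  simp only [star_trivial, SimpleGraph.lapMatrix, Matrix.sub_mulVec, dotProduct_sub,
    SimpleGraph.dotProduct_mulVec_degMatrix, SimpleGraph.dotProduct_mulVec_adjMatrix] at h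
  simpa only [SimpleGraph.neighborFinset_eq_filter, Finset.sum_filter, sq, mul_assoc,
    sub_nonneg] using h

theorem card_filter_le_abs_mul_sq_le_sum_sq {ι : Type*} (s : Finset ι) (f : ι → ℝ) {t : ℝ}
    (ht : 0 ≤ t) :
    #{i ∈ s | t ≤ |f i|} * t ^ 2 ≤ ∑ i ∈ s, f i ^ 2 := by
  have hle : ∀ i ∈ s.filter (fun i => t ≤ |f i|), t ^ 2 ≤ f i ^ 2 := fun i hi => by
    simpa only [sq_abs] using pow_le_pow_left₀ ht (mem_filter.1 hi).2 2
  calc (#{i ∈ s | t ≤ |f i|} : ℝ) * t ^ 2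
      ≤ ∑ i ∈ s.filter (fun i => t ≤ |f i|), f i ^ 2 := by
        simpa only [nsmul_eq_mul] using card_nsmul_le_sum _ _ _ hle
    _ ≤ ∑ i ∈ s, f i ^ 2 :=
        sum_le_sum_of_subset_of_nonneg (filter_subset _ _) fun i _ _ => sq_nonneg (f i)

theorem cast_descFactorial_four (n : ℕ) :
    (n.descFactorial 4 : ℝ) = n * (n - 1) * (n - 2) * (n - 3) := by
  rcases n with _ | _ | _ | _ | n
  all_goals simp [Nat.descFactorial_succ]
  ring

theorem pow_four_sub_le_descFactorial_four (n : ℕ) :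
    (n : ℝ) ^ 4 - 6 * n ^ 3 ≤ n.descFactorial 4 := by
  rw [cast_descFactorial_four]
  rcases n.eq_zero_or_pos with rfl | hn
  · simp
  · have : (1 : ℝ) ≤ n := by exact_mod_cast hn
    nlinarith

theorem card_filter_val_mod_eq_bounds {n r : ℕ} (hr : 0 < r) {c : ℕ} (hc : c < r) :
    n < r * (#{x : Fin n | (x : ℕ) % r = c} + 1) ∧
      r * #{x : Fin n | (x : ℕ) % r = c} < n + r := by
  have hcount : #{x : Fin n | (x : ℕ) % r = c} = n.count (· ≡ c [MOD r]) := by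
    rw [Nat.count_eq_card_filter_range, ← Nat.Iio_eq_range, ← Fin.map_valEmbedding_univ,
      Finset.filter_map, Finset.card_map]
    simp [Nat.ModEq, Nat.mod_eq_of_lt hc]
  rw [hcount, Nat.count_modEq_card n hr, Nat.mod_eq_of_lt hc]
  have := Nat.div_add_mod n r
  have := Nat.mod_lt n hr
  split_ifs <;> simp only [add_zero, mul_add, mul_one] <;> constructor <;>
    linarith [Nat.zero_le (n % r)]

-- `4n³/27 - d (n - d)² = (d - n/3)² (4n/3 - d)`
theorem mul_sub_sq_add_mul_sub_sq_le {d n : ℝ} (hd : d ≤ n) :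
    d * (n - d) ^ 2 + n / 3 * (d - n / 3) ^ 2 ≤ 4 / 27 * n ^ 3 := by
  nlinarith [mul_nonneg (sq_nonneg (d - n / 3)) (sub_nonneg.2 hd)]

theorem le_mul_sub_one_mul_sub_mul_sub_sub_one {a n : ℝ} (hn : 5 ≤ n) (h₁ : n - 2 ≤ 3 * a)
    (h₂ : 3 * a ≤ n + 2) :
    2 * (n - 1) * (n - 2) * (n - 5) * (2 * n - 5) ≤
      81 * (a * (a - 1) * ((n - a) * (n - a - 1))) := by
  have ha : (n - 2) * (n - 5) ≤ 9 * (a * (a - 1)) := by nlinarith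
  have hb : (2 * n - 2) * (2 * n - 5) ≤ 9 * ((n - a) * (n - a - 1)) := by nlinarith
  nlinarith [mul_le_mul ha hb (by nlinarith) (by nlinarith)]

theorem numEmbBRB_le_sum_adj {n : ℕ} (G : SimpleGraph (Fin n)) :
    numEmbBRB G ≤ ∑ u, ∑ v ∈ G.neighborFinset u, (n - G.degree u) * (n - G.degree v) := by
  calc numEmbBRB G ≤ #(univ.sigma fun u => (G.neighborFinset u).sigma fun v =>
        (G.neighborFinset u)ᶜ ×ˢ (G.neighborFinset v)ᶜ) := by
        refine card_le_card_of_injOn (fun f => ⟨f 1, f 2, f 0, f 3⟩) ?_ ?_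
        · intro f hf
          simp only [mem_coe, mem_filter, mem_univ, true_and] at hf
          simp [hf.2.2.1, G.adj_comm (f 1), hf.2.1, hf.2.2.2]
        · intro f _ g _ hfg
          simp only [Sigma.mk.injEq, heq_eq_eq, Prod.mk.injEq] at hfg
          funext i
          fin_cases i <;> simp [hfg]
    _ = _ := by
        simp [card_sigma, card_product, card_compl, SimpleGraph.card_neighborFinset_eq_degree]

theorem numEmbBRB_add_le {n : ℕ} (G : SimpleGraph (Fin n)) :
    numEmbBRB G + n / 3 * ∑ u, ((G.degree u : ℝ) - n / 3) ^ 2 ≤ 4 / 27 * (n : ℝ) ^ 4 := by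
  have hdeg u : G.degree u ≤ n := by simpa using (G.degree_lt_card_verts u).le
  have hcount : (numEmbBRB G : ℝ) ≤
      ∑ u, ∑ v ∈ G.neighborFinset u, ((n : ℝ) - G.degree u) * ((n : ℝ) - G.degree v) := by
    have := numEmbBRB_le_sum_adj G
    rw [← Nat.cast_le (α := ℝ)] at this
    push_cast [Nat.cast_sub (hdeg _)] at this
    exact this
  calc (numEmbBRB G : ℝ) + n / 3 * ∑ u, ((G.degree u : ℝ) - n / 3) ^ 2
      ≤ ∑ u, (G.degree u * ((n : ℝ) - G.degree u) ^ 2 +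
          n / 3 * ((G.degree u : ℝ) - n / 3) ^ 2) := by
        rw [sum_add_distrib, ← mul_sum]
        linarith [G.sum_adj_mul_le_sum_degree_mul_sq fun u => (n : ℝ) - G.degree u]
    _ ≤ ∑ _u : Fin n, 4 / 27 * (n : ℝ) ^ 3 :=
        sum_le_sum fun u _ => mul_sub_sq_add_mul_sub_sq_le (by exact_mod_cast hdeg u)
    _ = 4 / 27 * (n : ℝ) ^ 4 := by simp; ring

theorem numEmbBRB_le {n : ℕ} (G : SimpleGraph (Fin n)) :
    (numEmbBRB G : ℝ) ≤ 4 / 27 * (n : ℝ) ^ 4 :=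
  le_of_add_le_of_nonneg_left (numEmbBRB_add_le G) (by positivity)

theorem lamBRBmax_le (n : ℕ) : lamBRBmax n ≤ 4 / 27 * (n : ℝ) ^ 4 / n.descFactorial 4 :=
  ciSup_le fun G => div_le_div_of_nonneg_right (numEmbBRB_le G) (Nat.cast_nonneg _)

def fiberCliques {V κ : Type*} (σ : V → κ) : SimpleGraph V :=
  SimpleGraph.fromRel fun x y => σ x = σ y

theorem sum_card_offDiag_mul_le_numEmbBRB {n : ℕ} {κ : Type*} [DecidableEq κ] (σ : Fin n → κ)
    (C : Finset κ) :
    ∑ c ∈ C, #(univ.filter (σ · = c)).offDiag * #(univ.filter (σ · = c))ᶜ.offDiag ≤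
      numEmbBRB (fiberCliques σ) := by
  calc ∑ c ∈ C, #(univ.filter (σ · = c)).offDiag * #(univ.filter (σ · = c))ᶜ.offDiag
      = #(C.sigma fun c =>
          (univ.filter (σ · = c)).offDiag ×ˢ (univ.filter (σ · = c))ᶜ.offDiag) := by
        simp only [card_sigma, card_product]
    _ ≤ numEmbBRB (fiberCliques σ) := by
        refine card_le_card_of_injOn (fun p => ![p.2.2.1, p.2.1.1, p.2.1.2, p.2.2.2]) ?_ ?_
        · rintro ⟨c, ⟨u, v⟩, ⟨x, y⟩⟩ hp
          simp only [mem_coe, mem_sigma, mem_product, mem_offDiag, mem_compl, mem_filter,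
            mem_univ, true_and] at hp
          obtain ⟨-, ⟨hu, hv, huv⟩, ⟨hx, hy, hxy⟩⟩ := hp
          simp only [mem_coe, mem_filter, mem_univ, true_and, fiberCliques,
            SimpleGraph.fromRel_adj]
          refine ⟨?_, ?_, ?_, ?_⟩
          · intro i j hij
            fin_cases i <;> fin_cases j <;> simp_all [eq_comm]
          · simp [hu, hx, eq_comm (b := σ x)]
          · simp [hu, hv, huv]
          · simp [hv, hy, eq_comm (b := σ y)]
        · rintro ⟨c, ⟨u, v⟩, ⟨x, y⟩⟩ hp ⟨c', ⟨u', v'⟩, ⟨x', y'⟩⟩ hp' h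
          simp only [mem_coe, mem_sigma, mem_product, mem_offDiag, mem_filter,
            mem_univ, true_and] at hp hp'
          have e0 : x = x' := congrFun h 0
          have e1 : u = u' := congrFun h 1
          have e2 : v = v' := congrFun h 2
          have e3 : y = y' := congrFun h 3
          subst e0 e1 e2 e3
          obtain rfl : c = c' := hp.2.1.1.symm.trans hp'.2.1.1
          rfl

theorem le_numEmbBRB_fiberCliques_mod_three {n : ℕ} (hn : 5 ≤ n) :
    4 / 27 * ((n : ℝ) - 1) * (n - 2) * (n - 3) * (n - 5) ≤
      numEmbBRB (fiberCliques fun x : Fin n => (x : ℕ) % 3) := by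
  have hclass : ∀ c ∈ range 3, 2 * ((n : ℝ) - 1) * (n - 2) * (n - 5) * (2 * n - 5) / 81 ≤
      (#(univ.filter fun x : Fin n => (x : ℕ) % 3 = c).offDiag *
        #(univ.filter fun x : Fin n => (x : ℕ) % 3 = c)ᶜ.offDiag : ℕ) := by
    intro c hc
    obtain ⟨h₁, h₂⟩ := card_filter_val_mod_eq_bounds (n := n) (by norm_num) (mem_range.1 hc)
    have ha := card_le_univ (univ.filter fun x : Fin n => (x : ℕ) % 3 = c)
    rw [Fintype.card_fin] at ha
    rw [offDiag_card, offDiag_card, card_compl, Fintype.card_fin]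
    set a := #(univ.filter fun x : Fin n => (x : ℕ) % 3 = c)
    rw [div_le_iff₀ (by norm_num)]
    push_cast [Nat.cast_sub (Nat.le_mul_self _), Nat.cast_sub ha]
    have h₁' : (n : ℝ) - 2 ≤ 3 * a := by
      rw [sub_le_iff_le_add]; exact_mod_cast (by omega : n ≤ 3 * a + 2)
    have h₂' : 3 * (a : ℝ) ≤ n + 2 := by exact_mod_cast (by omega : 3 * a ≤ n + 2)
    have := le_mul_sub_one_mul_sub_mul_sub_sub_one (by exact_mod_cast hn) h₁' h₂'
    linarith
  calc 4 / 27 * ((n : ℝ) - 1) * (n - 2) * (n - 3) * (n - 5)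
      ≤ ∑ _c ∈ range 3, 2 * ((n : ℝ) - 1) * (n - 2) * (n - 5) * (2 * n - 5) / 81 := by
        have hn' : (5 : ℝ) ≤ n := by exact_mod_cast hn
        have h : 0 ≤ ((n : ℝ) - 1) * (n - 2) * (n - 5) :=
          mul_nonneg (mul_nonneg (by linarith) (by linarith)) (by linarith)
        simp only [sum_const, card_range, nsmul_eq_mul]
        nlinarith [h]
    _ ≤ _ := sum_le_sum hclass
    _ ≤ _ := by
        have := sum_card_offDiag_mul_le_numEmbBRB (fun x : Fin n => (x : ℕ) % 3) (range 3)
        rw [← Nat.cast_le (α := ℝ), Nat.cast_sum] at this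
        exact this

theorem le_lamBRB_fiberCliques_mod_three {n : ℕ} (hn : 5 ≤ n) :
    4 / 27 * (1 - 5 / (n : ℝ)) ≤ lamBRB (fiberCliques fun x : Fin n => (x : ℕ) % 3) := by
  have hpos : (0 : ℝ) < n.descFactorial 4 := by
    exact_mod_cast Nat.descFactorial_pos.2 (by omega)
  have hn0 : (n : ℝ) ≠ 0 := by positivity
  rw [lamBRB, le_div_iff₀ hpos, cast_descFactorial_four]
  calc 4 / 27 * (1 - 5 / (n : ℝ)) * (n * (n - 1) * (n - 2) * (n - 3))
      = 4 / 27 * ((n : ℝ) - 1) * (n - 2) * (n - 3) * (n - 5) := by field_simp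
    _ ≤ _ := le_numEmbBRB_fiberCliques_mod_three hn

theorem lamBRB_le_lamBRBmax {n : ℕ} (G : SimpleGraph (Fin n)) : lamBRB G ≤ lamBRBmax n :=
  le_ciSup (Set.finite_range _).bddAbove G

theorem tendsto_lamBRBmax : Tendsto lamBRBmax atTop (𝓝 (4 / 27)) := by
  have hlower : Tendsto (fun n : ℕ => 4 / 27 * (1 - 5 / (n : ℝ))) atTop (𝓝 (4 / 27)) := by
    simpa using
      ((tendsto_const_div_atTop_nhds_zero_nat (5 : ℝ)).const_sub 1).const_mul (4 / 27 : ℝ)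
  have hupper : Tendsto (fun n : ℕ => 4 / 27 * (n : ℝ) ^ 4 / n.descFactorial 4) atTop
      (𝓝 (4 / 27)) := by
    have hne : ∀ᶠ n : ℕ in atTop, (n.descFactorial 4 : ℝ) ≠ 0 :=
      eventually_atTop.2 ⟨4, fun n hn => by exact_mod_cast (Nat.descFactorial_pos.2 hn).ne'⟩
    have h := (Asymptotics.isEquivalent_iff_tendsto_one hne).1
      (isEquivalent_descFactorial 4).symm
    simpa [mul_div_assoc] using h.const_mul (4 / 27 : ℝ)
  refine tendsto_of_tendsto_of_tendsto_of_le_of_le' hlower hupper ?_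
    (Eventually.of_forall lamBRBmax_le)
  filter_upwards [eventually_ge_atTop 5] with n hn
  exact (le_lamBRB_fiberCliques_mod_three hn).trans (lamBRB_le_lamBRBmax _)

theorem sum_sq_degree_sub_le_of_le_lamBRB {n : ℕ} (hn : 4 ≤ n) {δ : ℝ} (hδ : 0 ≤ δ)
    {G : SimpleGraph (Fin n)} (hG : 4 / 27 - δ ≤ lamBRB G) :
    n / 3 * ∑ u, ((G.degree u : ℝ) - n / 3) ^ 2 ≤ δ * n ^ 4 + 8 / 9 * n ^ 3 := by
  have hpos : (0 : ℝ) < n.descFactorial 4 := by exact_mod_cast Nat.descFactorial_pos.2 hn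
  have hemb : (4 / 27 - δ) * n.descFactorial 4 ≤ numEmbBRB G := (le_div_iff₀ hpos).1 hG
  have hle : (n.descFactorial 4 : ℝ) ≤ n ^ 4 := by exact_mod_cast Nat.descFactorial_le_pow n 4
  nlinarith [numEmbBRB_add_le G, pow_four_sub_le_descFactorial_four n,
    mul_le_mul_of_nonneg_left hle hδ]

theorem le_card_degree_near_of_le_lamBRB {ε : ℝ} (hε : 0 < ε) {n : ℕ} (hn4 : 4 ≤ n)
    (hn : 6 / ε ^ 3 ≤ n) {G : SimpleGraph (Fin n)} (hG : 4 / 27 - ε ^ 3 / 6 ≤ lamBRB G) :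
    (1 - ε) * n ≤
      #{u | (1 / 3 - ε) * (n : ℝ) ≤ G.degree u ∧ (G.degree u : ℝ) ≤ (1 / 3 + ε) * n} := by
  set near : Finset (Fin n) :=
    {u | (1 / 3 - ε) * (n : ℝ) ≤ G.degree u ∧ (G.degree u : ℝ) ≤ (1 / 3 + ε) * n}
  set far : Finset (Fin n) := {u | ε * n ≤ |(G.degree u : ℝ) - n / 3|}
  have hn0 : (0 : ℝ) < n := by positivity
  have hεn : 6 ≤ ε ^ 3 * n := by rwa [div_le_iff₀' (by positivity)] at hn
  have hfar : #far * (ε * n) ^ 2 ≤ ∑ u, ((G.degree u : ℝ) - n / 3) ^ 2 :=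
    card_filter_le_abs_mul_sq_le_sum_sq univ _ (by positivity)
  have hS := sum_sq_degree_sub_le_of_le_lamBRB hn4 (by positivity) hG
  have hfar_le : (#far : ℝ) ≤ ε * n := by
    by_contra! h
    nlinarith [mul_lt_mul_of_pos_right h (by positivity : (0 : ℝ) < ε ^ 2 * n ^ 3),
      mul_le_mul_of_nonneg_left hεn (by positivity : (0 : ℝ) ≤ n ^ 3),
      mul_le_mul_of_nonneg_left hfar (by positivity : (0 : ℝ) ≤ n / 3),
      (by positivity : (0 : ℝ) < n ^ 3)]
  have hcover : n ≤ #near + #far := by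
    calc n = #(univ : Finset (Fin n)) := (card_fin n).symm
      _ ≤ #(near ∪ far) := card_le_card fun u _ => by
          simp only [near, far, mem_union, mem_filter, mem_univ, true_and]
          rcases le_or_gt (ε * n) |(G.degree u : ℝ) - n / 3| with h | h
          · exact Or.inr h
          · rw [abs_sub_lt_iff] at h
            exact Or.inl ⟨by linarith, by linarith⟩
      _ ≤ #near + #far := card_union_le _ _
  have : (n : ℝ) ≤ #near + #far := by exact_mod_cast hcover
  linarith

theorem semi_inducibility_blue_red_blue_path :
    Filter.Tendsto (fun n => lamBRBmax n) Filter.atTop (nhds (4/27)) ∧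
    ∀ ε : ℝ, 0 < ε → ∃ δ : ℝ, 0 < δ ∧ ∃ n₀ : ℕ, ∀ n : ℕ, n₀ ≤ n →
      ∀ G : SimpleGraph (Fin n), 4/27 - δ ≤ lamBRB G →
        (1 - ε) * (n : ℝ) ≤
          ((Finset.univ.filter (fun u : Fin n =>
            (1/3 - ε) * (n : ℝ) ≤ (G.degree u : ℝ) ∧
            (G.degree u : ℝ) ≤ (1/3 + ε) * (n : ℝ))).card : ℝ) := by
  refine ⟨tendsto_lamBRBmax, fun ε hε => ⟨ε ^ 3 / 6, by positivity, ⌈6 / ε ^ 3⌉₊ + 4,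
    fun n hn G hG => le_card_degree_near_of_le_lamBRB hε (by omega) ?_ hG⟩⟩
  exact (Nat.le_ceil _).trans (by exact_mod_cast (by omega : ⌈6 / ε ^ 3⌉₊ ≤ n))
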